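/- Let ψ:ℕ→(0,∞) be non-increasing with tψ(t)<1 for all large t. Then an irrational x∈[0,1) belongs to D(ψ) if and only if |q_{n−1}(x)·x − p_{n−1}(x)| < ψ(q_n(x)) for all sufficiently large n, where p_n(x)/q_n(x) are the continued fraction convergents of x. -/

import Mathlib

open Filter MeasureTheory Set

/-- The set `D(ψ)` of `ψ`-Dirichlet improvable numbers, for `ψ : ℕ → ℝ`: those `x ∈ ℝ`
such that for all sufficiently large `t ∈ ℕ` the system `|qx - p| < ψ t`, `|q| < t` has a
nontrivial integer solution `(p, q)`. -/
def DirichletSetNat (ψ : ℕ → ℝ) : Set ℝ :=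
  {x | ∃ N : ℕ, ∀ t : ℕ, t > N →
    ∃ p q : ℤ, (p, q) ≠ (0, 0) ∧ |(q : ℝ) * x - p| < ψ t ∧ |(q : ℝ)| < t}

/-- The Gauss map `T(x) = 1/x mod 1`, with `T(0) = 0`. -/
noncomputable def gaussMap (x : ℝ) : ℝ := if x = 0 then 0 else Int.fract (1 / x)

/-- `cfA x n` is the `n`-th partial quotient `a_n(x)` of the continued fraction
expansion of `x ∈ [0,1)`, for `n ≥ 1`: `a_n(x) = ⌊1 / T^{n-1}(x)⌋`. -/
noncomputable def cfA (x : ℝ) (n : ℕ) : ℕ := ⌊1 / (gaussMap^[n - 1] x)⌋₊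

/-- `cfQ x n` is the denominator `q_n(x)` of the `n`-th convergent of `x`:
`q₀ = 1`, `q₁ = a₁`, `q_{n+2} = a_{n+2} q_{n+1} + q_n`. -/
noncomputable def cfQ (x : ℝ) : ℕ → ℕ
  | 0 => 1
  | 1 => cfA x 1
  | (n + 2) => cfA x (n + 2) * cfQ x (n + 1) + cfQ x n

/-- `cfP x n` is the numerator `p_n(x)` of the `n`-th convergent of `x`:
`p₀ = 0`, `p₁ = 1`, `p_{n+2} = a_{n+2} p_{n+1} + p_n`. -/
noncomputable def cfP (x : ℝ) : ℕ → ℕ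
  | 0 => 0
  | 1 => 1
  | (n + 2) => cfA x (n + 2) * cfP x (n + 1) + cfP x n

/-
Write `D n = q_n x - p_n`. The Gauss map gives `D (n+1) = -T^{n+1}(x) · D n`, so the `D n` are
nonzero with alternating signs. Since `p_{n+1} q_n - p_n q_{n+1} = ±1`, any `(p, q)` is an integer
combination `a (p_n, q_n) + b (p_{n+1}, q_{n+1})`; if `0 < |q| < q_{n+1}` then `a ≠ 0` and `a b ≤ 0`,
so `qx - p = a D n + b D (n+1)` is a sum of two terms of equal sign and `|qx - p| ≥ |D n|`
(best approximation). Hence for `q_n < t ≤ q_{n+1}` the system at level `t` is solvable iff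
`|D n| < ψ t`, and monotonicity of `ψ` together with `ψ t < 1` (which excludes `q = 0`) turns
this into the criterion at `t = q_{n+1}`.
-/

lemma abs_le_abs_add_of_mul_nonneg {α : Type*} [CommRing α] [LinearOrder α] [IsStrictOrderedRing α]
    {u v : α} (h : 0 ≤ u * v) : |v| ≤ |u + v| :=
  sq_le_sq.mp (by nlinarith [sq_nonneg u])

lemma exists_lt_and_le_succ {α : Type*} [LinearOrder α] {f : ℕ → α} {t : α} (h₀ : f 0 < t)
    (h : ∃ m, t ≤ f m) : ∃ n, f n < t ∧ t ≤ f (n + 1) := by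
  by_contra! H
  obtain ⟨m, hm⟩ := h
  exact (Nat.rec h₀ H m : f m < t).not_ge hm

lemma gaussMap_of_ne_zero {x : ℝ} (hx : x ≠ 0) : gaussMap x = Int.fract (1 / x) := if_neg hx

lemma irrational_gaussMap {x : ℝ} (hx : Irrational x) : Irrational (gaussMap x) := by
  rw [gaussMap_of_ne_zero hx.ne_zero, Int.fract, one_div]
  exact hx.inv.sub_intCast _

lemma gaussMap_mem_Ioo {x : ℝ} (hx : Irrational x) : gaussMap x ∈ Ioo 0 1 := by
  rw [gaussMap_of_ne_zero hx.ne_zero]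
  exact ⟨(Int.fract_nonneg _).lt_of_ne'
    (gaussMap_of_ne_zero hx.ne_zero ▸ (irrational_gaussMap hx).ne_zero), Int.fract_lt_one _⟩

lemma irrational_gaussMap_iterate {x : ℝ} (hx : Irrational x) (k : ℕ) :
    Irrational (gaussMap^[k] x) := by
  induction k with
  | zero => exact hx
  | succ k ih => rw [Function.iterate_succ_apply']; exact irrational_gaussMap ih

lemma gaussMap_iterate_mem_Ioo {x : ℝ} (hx : x ∈ Ico 0 1) (hirr : Irrational x) :
    ∀ k, gaussMap^[k] x ∈ Ioo 0 1
  | 0 => ⟨hx.1.lt_of_ne' hirr.ne_zero, hx.2⟩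
  | k + 1 => by
    rw [Function.iterate_succ_apply']
    exact gaussMap_mem_Ioo (irrational_gaussMap_iterate hirr k)

section ContinuedFraction

variable {x : ℝ}

lemma cfA_succ (k : ℕ) : cfA x (k + 1) = ⌊1 / gaussMap^[k] x⌋₊ := rfl

lemma one_le_cfA (hT : ∀ k, gaussMap^[k] x ∈ Ioo 0 1) (k : ℕ) : 1 ≤ cfA x (k + 1) :=
  cfA_succ k ▸ Nat.le_floor (by
    rw [Nat.cast_one, le_div_iff₀ (hT k).1, one_mul]
    exact (hT k).2.le)

lemma gaussMap_iterate_succ (hT : ∀ k, gaussMap^[k] x ∈ Ioo 0 1) (k : ℕ) :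
    gaussMap^[k + 1] x = 1 / gaussMap^[k] x - cfA x (k + 1) := by
  have hpos := (hT k).1
  rw [Function.iterate_succ_apply', gaussMap_of_ne_zero hpos.ne', Int.fract, cfA_succ,
    natCast_floor_eq_intCast_floor (by positivity)]

lemma cfQ_pos (ha : ∀ k, 1 ≤ cfA x (k + 1)) : ∀ n, 0 < cfQ x n
  | 0 => one_pos
  | 1 => ha 0
  | n + 2 => by
    have := cfQ_pos ha n
    have := cfQ_pos ha (n + 1)
    have := ha (n + 1)
    simp only [cfQ]
    positivity

lemma cfQ_mono (ha : ∀ k, 1 ≤ cfA x (k + 1)) : Monotone (cfQ x) := by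
  refine monotone_nat_of_le_succ fun n => ?_
  match n with
  | 0 => exact ha 0
  | n + 1 =>
    show cfQ x (n + 1) ≤ cfA x (n + 2) * cfQ x (n + 1) + cfQ x n
    nlinarith [ha (n + 1)]

lemma le_cfQ (ha : ∀ k, 1 ≤ cfA x (k + 1)) : ∀ n, n ≤ cfQ x n
  | 0 => Nat.zero_le _
  | 1 => ha 0
  | n + 2 => by
    have := le_cfQ ha (n + 1)
    have := cfQ_pos ha n
    show n + 2 ≤ cfA x (n + 2) * cfQ x (n + 1) + cfQ x n
    nlinarith [ha (n + 1)]

lemma cfP_succ_mul_cfQ_sub_cfP_mul_cfQ_succ (n : ℕ) :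
    (cfP x (n + 1) : ℤ) * cfQ x n - cfP x n * cfQ x (n + 1) = (-1) ^ n := by
  induction n with
  | zero => simp [cfP, cfQ]
  | succ n ih =>
    simp only [cfP, cfQ, Nat.cast_add, Nat.cast_mul, pow_succ]
    linear_combination -ih

lemma exists_eq_cfP_cfQ_combination (n : ℕ) (p q : ℤ) : ∃ a b : ℤ,
    a * cfQ x n + b * cfQ x (n + 1) = q ∧ a * cfP x n + b * cfP x (n + 1) = p := by
  have hdet := cfP_succ_mul_cfQ_sub_cfP_mul_cfQ_succ (x := x) n
  have hsq : ((-1 : ℤ) ^ n) ^ 2 = 1 := by rw [← pow_mul, mul_comm, pow_mul, neg_one_sq, one_pow]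
  refine ⟨(-1) ^ n * (cfP x (n + 1) * q - cfQ x (n + 1) * p),
    (-1) ^ n * (cfQ x n * p - cfP x n * q), ?_, ?_⟩
  · linear_combination ((-1) ^ n * q) * hdet + q * hsq
  · linear_combination ((-1) ^ n * p) * hdet + p * hsq

noncomputable def cfD (x : ℝ) (n : ℕ) : ℝ := cfQ x n * x - cfP x n

lemma cfD_add_two (n : ℕ) : cfD x (n + 2) = cfA x (n + 2) * cfD x (n + 1) + cfD x n := by
  simp only [cfD, cfQ, cfP]
  push_cast
  ring

lemma cfD_succ (hT : ∀ k, gaussMap^[k] x ∈ Ioo 0 1) (n : ℕ) :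
    cfD x (n + 1) = -gaussMap^[n + 1] x * cfD x n := by
  induction n with
  | zero =>
    have hx : x ≠ 0 := (hT 0).1.ne'
    rw [gaussMap_iterate_succ hT]
    simp only [cfD, cfQ, cfP, Function.iterate_zero, id_eq, Nat.cast_one, Nat.cast_zero]
    field_simp
    ring
  | succ n ih =>
    have hT' := (hT (n + 1)).1.ne'
    rw [cfD_add_two, ih, gaussMap_iterate_succ hT (n + 1)]
    field_simp
    ring

lemma cfD_ne_zero (hT : ∀ k, gaussMap^[k] x ∈ Ioo 0 1) : ∀ n, cfD x n ≠ 0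
  | 0 => by simpa [cfD, cfQ, cfP] using (hT 0).1.ne'
  | n + 1 => by
    rw [cfD_succ hT]
    exact mul_ne_zero (neg_ne_zero.mpr (hT (n + 1)).1.ne') (cfD_ne_zero hT n)

lemma cfD_mul_cfD_succ_neg (hT : ∀ k, gaussMap^[k] x ∈ Ioo 0 1) (n : ℕ) :
    cfD x n * cfD x (n + 1) < 0 := by
  have := (hT (n + 1)).1
  have := pow_pos (abs_pos.mpr (cfD_ne_zero hT n)) 2
  rw [cfD_succ hT, sq_abs] at *
  nlinarith

lemma abs_cfD_le (hT : ∀ k, gaussMap^[k] x ∈ Ioo 0 1) (n : ℕ) (p q : ℤ) (hq : q ≠ 0)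
    (hlt : |q| < cfQ x (n + 1)) : |cfD x n| ≤ |q * x - p| := by
  obtain ⟨a, b, hq_eq, hp_eq⟩ := exists_eq_cfP_cfQ_combination (x := x) n p q
  have hQ : (0 : ℤ) < cfQ x (n + 1) := mod_cast cfQ_pos (one_le_cfA hT) (n + 1)
  have hab : a ≠ 0 ∧ a * b ≤ 0 := by
    by_cases hb : b = 0
    · subst hb
      exact ⟨by rintro rfl; simp_all, by simp⟩
    · suffices a * b < 0 from ⟨by rintro rfl; simp at this, this.le⟩
      by_contra! hab
      have h1 : |b * (cfQ x (n + 1) : ℤ)| ≤ |q| :=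
        hq_eq ▸ abs_le_abs_add_of_mul_nonneg (by
          have := mul_nonneg (mul_nonneg hab (cfQ x n).cast_nonneg) hQ.le
          linarith)
      rw [abs_mul, abs_of_pos hQ] at h1
      nlinarith [Int.one_le_abs hb]
  have hsum : (q : ℝ) * x - p = a * cfD x n + b * cfD x (n + 1) := by
    rw [← hq_eq, ← hp_eq]
    simp only [cfD]
    push_cast
    ring
  have ha1 : (1 : ℝ) ≤ |(a : ℝ)| := by exact_mod_cast Int.one_le_abs hab.1
  have hab' : (a : ℝ) * b ≤ 0 := by exact_mod_cast hab.2
  have hsame : 0 ≤ b * cfD x (n + 1) * (a * cfD x n) := by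
    have := mul_nonneg_of_nonpos_of_nonpos hab' (cfD_mul_cfD_succ_neg hT n).le
    linarith
  calc |cfD x n| ≤ |(a : ℝ)| * |cfD x n| := le_mul_of_one_le_left (abs_nonneg _) ha1
    _ = |a * cfD x n| := (abs_mul _ _).symm
    _ ≤ |b * cfD x (n + 1) + a * cfD x n| := abs_le_abs_add_of_mul_nonneg hsame
    _ = |q * x - p| := by rw [hsum, add_comm]

end ContinuedFraction

lemma ne_zero_of_abs_intCast_mul_sub_lt_one {x : ℝ} {p q : ℤ} (hpq : (p, q) ≠ (0, 0))
    (h : |(q : ℝ) * x - p| < 1) : q ≠ 0 := by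
  rintro rfl
  have hp : p ≠ 0 := by simpa using hpq
  rw [Int.cast_zero, zero_mul, zero_sub, abs_neg, ← Int.cast_abs] at h
  exact (Int.one_le_abs hp).not_gt (mod_cast h)

lemma eventually_abs_cfD_lt_of_mem_dirichletSetNat {ψ : ℕ → ℝ} {x : ℝ}
    (hψ : ∃ T : ℕ, ∀ t ≥ T, (t : ℝ) * ψ t < 1) (hT : ∀ k, gaussMap^[k] x ∈ Ioo 0 1)
    (hxD : x ∈ DirichletSetNat ψ) : ∃ N, ∀ n ≥ N, |cfD x n| < ψ (cfQ x (n + 1)) := by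
  obtain ⟨N, hN⟩ := hxD
  obtain ⟨T, hT1⟩ := hψ
  refine ⟨max N T, fun n hn => ?_⟩
  have hn1 := le_cfQ (one_le_cfA hT) (n + 1)
  obtain ⟨p, q, hpq, happrox, hq⟩ := hN (cfQ x (n + 1)) (by omega)
  have hψ1 : ψ (cfQ x (n + 1)) < 1 := by
    have := hT1 (cfQ x (n + 1)) (by omega)
    have : (1 : ℝ) ≤ cfQ x (n + 1) := by exact_mod_cast (by omega : 1 ≤ cfQ x (n + 1))
    nlinarith
  have hq0 := ne_zero_of_abs_intCast_mul_sub_lt_one hpq (happrox.trans hψ1)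
  exact (abs_cfD_le hT n p q hq0 (mod_cast hq)).trans_lt happrox

lemma mem_dirichletSetNat_of_eventually_abs_cfD_lt {ψ : ℕ → ℝ} {x : ℝ} {N : ℕ}
    (hψ : ∀ m n : ℕ, 0 < m → m ≤ n → ψ n ≤ ψ m) (ha : ∀ k, 1 ≤ cfA x (k + 1))
    (hN : ∀ n ≥ N, |cfD x n| < ψ (cfQ x (n + 1))) : x ∈ DirichletSetNat ψ := by
  refine ⟨cfQ x N, fun t ht => ?_⟩
  obtain ⟨n, hlt, hle⟩ := exists_lt_and_le_succ ((cfQ_mono ha (Nat.zero_le N)).trans_lt ht)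
    ⟨t + 1, (Nat.le_succ t).trans (le_cfQ ha (t + 1))⟩
  have hnN : N ≤ n := Nat.lt_succ_iff.mp ((cfQ_mono ha).reflect_lt (ht.trans_le hle))
  have hq := cfQ_pos ha n
  refine ⟨cfP x n, cfQ x n, by simp [hq.ne'], ?_, ?_⟩
  · exact (hN n hnN).trans_le (hψ t _ (by omega) hle)
  · rw [Int.cast_natCast, Nat.abs_cast]
    exact_mod_cast hlt

theorem mem_dirichletSet_iff_convergents_general
    (ψ : ℕ → ℝ)
    (hψanti : ∀ m n : ℕ, 0 < m → m ≤ n → ψ n ≤ ψ m)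
    (hψ1 : ∃ T : ℕ, ∀ t ≥ T, (t : ℝ) * ψ t < 1)
    (x : ℝ) (hx : x ∈ Ico (0 : ℝ) 1) (hirr : Irrational x) :
    x ∈ DirichletSetNat ψ ↔
      ∃ N : ℕ, ∀ n ≥ N, |(cfQ x n : ℝ) * x - cfP x n| < ψ (cfQ x (n + 1)) := by
  have hT := gaussMap_iterate_mem_Ioo hx hirr
  refine ⟨eventually_abs_cfD_lt_of_mem_dirichletSetNat hψ1 hT, fun ⟨N, hN⟩ => ?_⟩
  exact mem_dirichletSetNat_of_eventually_abs_cfD_lt hψanti (one_le_cfA hT) hN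

/-- **Criterion for Dirichlet improvability via convergents.** For irrational
`x ∈ [0,1)`, `x ∈ D(ψ)` iff `|q_{n-1}(x) x - p_{n-1}(x)| < ψ(q_n(x))` for all
sufficiently large `n` (stated here with the index shift `n ↦ n + 1`). -/
theorem mem_dirichletSet_iff_convergents
    (ψ : ℕ → ℝ) (hψpos : ∀ t : ℕ, 0 < t → 0 < ψ t)
    (hψanti : ∀ m n : ℕ, 0 < m → m ≤ n → ψ n ≤ ψ m)
    (hψ1 : ∃ T : ℕ, ∀ t ≥ T, (t : ℝ) * ψ t < 1)
    (x : ℝ) (hx : x ∈ Ico (0 : ℝ) 1) (hirr : Irrational x) :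
    x ∈ DirichletSetNat ψ ↔
      ∃ N : ℕ, ∀ n ≥ N, |(cfQ x n : ℝ) * x - cfP x n| < ψ (cfQ x (n + 1)) :=
  mem_dirichletSet_iff_convergents_general ψ hψanti hψ1 x hx hirr
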